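/- Let {x_n}, {y_n}, {z_n} be complex sequences indexed by nonzero integers satisfying the trilinear system and parity. Suppose for some integer p ≥ 2: x_n = y_n = z_n = 0 for 0 < |n| < p, y_{pn} = z_{pn} = 0 for all n ≠ 0, x_p ≠ 0, and x_{kp} ≠ 0 for all k > 0. Then y_n = z_n = 0 for all n ≠ 0. -/

import Mathlib

/-!
Fix a positive index `n` that is not a multiple of `p` and choose the multiple `N = kp` just above
`n`, so that `0 < N - n < p`. Instantiating the system at `(n₁, n₂) = (-N, n)` kills every term
but `x_{-N} y_n`, because `x_{n-N} = 0` and `z_N = 0`; hence `y_n = 0`. Instantiating it at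
`(N - n, n)` then leaves only `x_N z_n`, because `y_n = y_N = 0`; hence `z_n = 0`. The parity
relations give `x_{-N} ≠ 0` and transport vanishing from positive to negative indices.
-/

def TrilinearSystem {R : Type*} [Ring R] (x y z : ℤ → R) : Prop :=
  ∀ n₁ n₂ : ℤ, n₁ ≠ 0 → n₂ ≠ 0 → n₁ + n₂ ≠ 0 →
    x n₁ * y n₂ - x (n₁ + n₂) * z n₂ + y (n₁ + n₂) * z (-n₁) = 0

namespace TrilinearSystem

variable {R : Type*} [Ring R] [NoZeroDivisors R] {x y z : ℤ → R}

theorem eq_zero_of_x_ne_zero (h : TrilinearSystem x y z) {n N : ℤ} (hn : n ≠ 0) (hN : N ≠ 0)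
    (hnN : n ≠ N) (hx : x (n - N) = 0) (hxN : x N ≠ 0) (hxN' : x (-N) ≠ 0) (hyN : y N = 0)
    (hzN : z N = 0) : y n = 0 ∧ z n = 0 := by
  have hy : y n = 0 := by
    have e := h (-N) n (neg_ne_zero.mpr hN) hn (by omega)
    rw [neg_add_eq_sub, hx, neg_neg, hzN] at e
    simpa [hxN'] using e
  refine ⟨hy, ?_⟩
  have e := h (N - n) n (sub_ne_zero.mpr hnN.symm) hn (by omega)
  rw [sub_add_cancel, hy, hyN] at e
  simpa [hxN] using e

end TrilinearSystem

theorem Int.exists_pos_mul_sub_pos_lt {p n : ℤ} (hp : 0 < p) (hn : 0 < n) (hdvd : ¬ p ∣ n) :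
    ∃ k : ℤ, 0 < k ∧ 0 < k * p - n ∧ k * p - n < p := by
  have hdiv := Int.mul_ediv_add_emod n p
  have hmod_pos : 0 < n % p :=
    (Int.emod_nonneg n hp.ne').lt_of_ne' fun h => hdvd (Int.dvd_of_emod_eq_zero h)
  have hmod_lt := Int.emod_lt_of_pos n hp
  refine ⟨n / p + 1, by linarith [Int.ediv_nonneg hn.le hp.le], ?_, ?_⟩ <;> linarith

theorem eq_zero_of_star_neg {R : Type*} [AddMonoid R] [StarAddMonoid R] {f : ℤ → R}
    (hf : ∀ n, f (-n) = star (f n)) (hpos : ∀ n, 0 < n → f n = 0) {n : ℤ} (hn : n ≠ 0) :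
    f n = 0 := by
  rcases hn.lt_or_gt with hneg | hpos'
  · rw [← neg_neg n, hf, hpos (-n) (by omega), star_zero]
  · exact hpos n hpos'

theorem stmt_19_general (x y z : ℤ → ℂ)
    (hsys : ∀ n1 n2 : ℤ, n1 ≠ 0 → n2 ≠ 0 → n1 + n2 ≠ 0 →
      x n1 * y n2 - x (n1 + n2) * z n2 + y (n1 + n2) * z (-n1) = 0)
    (hpar : ∀ n : ℤ, x (-n) = (starRingEnd ℂ) (x n) ∧ y (-n) = (starRingEnd ℂ) (y n) ∧
      z (-n) = (starRingEnd ℂ) (z n))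
    (p : ℤ) (hp : 2 ≤ p)
    (hsmall : ∀ n : ℤ, 0 < |n| → |n| < p → x n = 0 ∧ y n = 0 ∧ z n = 0)
    (hmult : ∀ n : ℤ, n ≠ 0 → y (p * n) = 0 ∧ z (p * n) = 0)
    (hxkp : ∀ k : ℤ, 0 < k → x (k * p) ≠ 0) :
    ∀ n : ℤ, n ≠ 0 → y n = 0 ∧ z n = 0 := by
  have hp0 : 0 < p := by omega
  have hpos : ∀ n, 0 < n → y n = 0 ∧ z n = 0 := by
    intro n hn
    by_cases hdvd : p ∣ n
    · obtain ⟨m, rfl⟩ := hdvd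
      exact hmult m (by rintro rfl; simp at hn)
    obtain ⟨k, hk, hgap, hgap_lt⟩ := Int.exists_pos_mul_sub_pos_lt hp0 hn hdvd
    have habs : |n - k * p| = k * p - n := by rw [abs_sub_comm, abs_of_pos hgap]
    have hx_gap : x (n - k * p) = 0 := (hsmall _ (habs ▸ hgap) (habs ▸ hgap_lt)).1
    have hxkp' : x (-(k * p)) ≠ 0 := by
      rw [(hpar _).1, map_ne_zero]
      exact hxkp k hk
    obtain ⟨hyk, hzk⟩ := mul_comm p k ▸ hmult k hk.ne'
    exact TrilinearSystem.eq_zero_of_x_ne_zero hsys hn.ne' (mul_pos hk hp0).ne' (by omega) hx_gap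
      (hxkp k hk) hxkp' hyk hzk
  intro n hn
  exact ⟨eq_zero_of_star_neg (fun n => (hpar n).2.1) (fun n hn => (hpos n hn).1) hn,
    eq_zero_of_star_neg (fun n => (hpar n).2.2) (fun n hn => (hpos n hn).2) hn⟩

theorem stmt_19 (x y z : ℤ → ℂ)
    (hsys : ∀ n1 n2 : ℤ, n1 ≠ 0 → n2 ≠ 0 → n1 + n2 ≠ 0 →
      x n1 * y n2 - x (n1 + n2) * z n2 + y (n1 + n2) * z (-n1) = 0)
    (hpar : ∀ n : ℤ, x (-n) = (starRingEnd ℂ) (x n) ∧ y (-n) = (starRingEnd ℂ) (y n) ∧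
      z (-n) = (starRingEnd ℂ) (z n))
    (p : ℤ) (hp : 2 ≤ p)
    (hsmall : ∀ n : ℤ, 0 < |n| → |n| < p → x n = 0 ∧ y n = 0 ∧ z n = 0)
    (hmult : ∀ n : ℤ, n ≠ 0 → y (p * n) = 0 ∧ z (p * n) = 0)
    (hxp : x p ≠ 0)
    (hxkp : ∀ k : ℤ, 0 < k → x (k * p) ≠ 0) :
    ∀ n : ℤ, n ≠ 0 → y n = 0 ∧ z n = 0 :=
  stmt_19_general x y z hsys hpar p hp hsmall hmult hxkp
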